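/- Let T be a finite tree rooted at a vertex r and let v be a vertex of T with at least one child. Then rho^l(T_v) = max over children u of v of ( max{rho^c(T_u), rho''(T_u)} + 1 + the sum over all children w of v with w ≠ u of rho'(T_w) ). -/

import Mathlib

/-!
Let `S` be an EOP set of `T_v` with `deg_S(v) = 1`, its edge at `v` being `vu` for a child `u`.
The subtrees of distinct children are disjoint and no edge of `T` joins two of them, so the rest
of `S` splits into its parts inside the child subtrees, and edges in different child subtrees
never have a common edge. The only constraints imposed by `vu` are: no edge of `S` at a child
`w ≠ u` (it would have the common edge `vw` with `vu`), and no edge of `S` in `T_u` meeting a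
neighbour `x` of `u` without passing through `u` (common edge `ux`). For an EOP set of `T_u` the
latter condition says exactly that `u` is the centre of a star of `S` or that `S` avoids the closed
neighbourhood of `u`, whence the term `max (ρᶜ(T_u), ρ''(T_u))`. Conversely, gluing `vu` to
optimal sets of the child subtrees satisfying these constraints yields an EOP set of `T_v` of the
claimed size.
-/

open scoped Classical

variable {V : Type*}

/-- Two edges `e₁, e₂` have a common edge in `H` if some edge of `H`, different from both,
joins an endvertex of `e₁` to an endvertex of `e₂`. -/
def HasCommonEdge (H : SimpleGraph V) (e₁ e₂ : Sym2 V) : Prop :=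
  ∃ x y : V, x ∈ e₁ ∧ y ∈ e₂ ∧ H.Adj x y ∧ s(x, y) ≠ e₁ ∧ s(x, y) ≠ e₂

/-- `S` is an edge open packing set of `H`. -/
def IsEOP (H : SimpleGraph V) (S : Set (Sym2 V)) : Prop :=
  S ⊆ H.edgeSet ∧ ∀ e₁ ∈ S, ∀ e₂ ∈ S, e₁ ≠ e₂ → ¬ HasCommonEdge H e₁ e₂

/-- The edge open packing number of `H`: the maximum cardinality of an EOP set of `H`. -/
noncomputable def eopNum (H : SimpleGraph V) : ℕ :=
  sSup {n | ∃ S : Set (Sym2 V), IsEOP H S ∧ S.ncard = n}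

/-- `deg_S(x)`: the number of edges of `S` incident with `x`. -/
noncomputable def degS (S : Set (Sym2 V)) (x : V) : ℕ :=
  {e ∈ S | x ∈ e}.ncard

/-- In the tree `T` rooted at `r`, the vertex `u` belongs to the subtree `T_v` (i.e. `u` is
`v` itself or a descendant of `v`) iff every walk from `u` to the root `r` passes through
`v`. -/
def InSubtree (T : SimpleGraph V) (r v u : V) : Prop :=
  ∀ p : T.Walk u r, v ∈ p.support

/-- The subtree `T_v` of the tree `T` rooted at `r`, induced by `v` together with all of its
descendants (realized as the subgraph of `T` on the same vertex set whose edges are exactly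
the edges of `T` with both endvertices in `T_v`). -/
def subtree (T : SimpleGraph V) (r v : V) : SimpleGraph V where
  Adj a b := T.Adj a b ∧ InSubtree T r v a ∧ InSubtree T r v b
  symm := ⟨by rintro a b ⟨h, ha, hb⟩; exact ⟨h.symm, hb, ha⟩⟩
  loopless := ⟨fun a h => T.irrefl h.1⟩

/-- `ρᶜ(H, v)`: the maximum cardinality of an EOP set `S` of `H` such that `deg_S(v) ≥ 1`
and every vertex joined to `v` by an edge of `S` has exactly one incident edge in `S`
(i.e. `v` is the center of a star of the subgraph induced by `S`); `0` if no such set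
exists. -/
noncomputable def rhoC (H : SimpleGraph V) (v : V) : ℕ :=
  sSup {n | ∃ S : Set (Sym2 V), IsEOP H S ∧ 1 ≤ degS S v ∧
    (∀ u : V, s(v, u) ∈ S → degS S u = 1) ∧ S.ncard = n}

/-- `ρˡ(H, v)`: the maximum cardinality of an EOP set `S` of `H` with `deg_S(v) = 1`
(i.e. `v` is a leaf of a star of the subgraph induced by `S`); `0` if no such set exists. -/
noncomputable def rhoL (H : SimpleGraph V) (v : V) : ℕ :=
  sSup {n | ∃ S : Set (Sym2 V), IsEOP H S ∧ degS S v = 1 ∧ S.ncard = n}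

/-- `ρ'(H, v)`: the maximum cardinality of an EOP set `S` of `H` with `deg_S(v) = 0`. -/
noncomputable def rhoP (H : SimpleGraph V) (v : V) : ℕ :=
  sSup {n | ∃ S : Set (Sym2 V), IsEOP H S ∧ degS S v = 0 ∧ S.ncard = n}

/-- `ρ''(H, v)`: the maximum cardinality of an EOP set `S` of `H` with `deg_S(x) = 0` for
every vertex `x` in the closed neighborhood of `v` in `H`. -/
noncomputable def rhoPP (H : SimpleGraph V) (v : V) : ℕ :=
  sSup {n | ∃ S : Set (Sym2 V), IsEOP H S ∧
    (∀ x : V, x = v ∨ H.Adj v x → degS S x = 0) ∧ S.ncard = n}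

open SimpleGraph Walk

lemma finsum_mem_le_finsum_mem {α M : Type*} [AddCommMonoid M] [PartialOrder M]
    [IsOrderedAddMonoid M] {s : Set α} {f g : α → M} (hs : s.Finite)
    (h : ∀ a ∈ s, f a ≤ g a) : ∑ᶠ a ∈ s, f a ≤ ∑ᶠ a ∈ s, g a := by
  rw [finsum_mem_eq_finite_toFinset_sum f hs, finsum_mem_eq_finite_toFinset_sum g hs]
  exact Finset.sum_le_sum fun a ha => h a (hs.mem_toFinset.mp ha)

lemma bddAbove_setOf_exists_eq {ι : Type*} [Finite ι] (P : ι → Prop) (f : ι → ℕ) :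
    BddAbove {n | ∃ i, P i ∧ n = f i} :=
  ((Set.finite_range f).subset (by rintro _ ⟨i, -, rfl⟩; exact ⟨i, rfl⟩)).bddAbove

section RootedTree

variable {T : SimpleGraph V} {r v u x : V}

def children (T : SimpleGraph V) (r v : V) : Set V :=
  {w | T.Adj v w ∧ InSubtree T r v w}

lemma InSubtree.refl (T : SimpleGraph V) (r v : V) : InSubtree T r v v :=
  fun p => p.start_mem_support

lemma InSubtree.trans (hvu : InSubtree T r v u) (hux : InSubtree T r u x) :
    InSubtree T r v x :=
  fun p => p.support_dropUntil_subset_support (hux p) (hvu _)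

lemma SimpleGraph.IsTree.eq_of_isPath (hT : T.IsTree) {a b : V} {p q : T.Walk a b}
    (hp : p.IsPath) (hq : q.IsPath) : p = q :=
  congrArg Subtype.val ((hT.isAcyclic.subsingleton_path a b).elim ⟨p, hp⟩ ⟨q, hq⟩)

lemma inSubtree_iff_mem_support (hT : T.IsTree) {p : T.Walk x r} (hp : p.IsPath) :
    InSubtree T r v x ↔ v ∈ p.support :=
  ⟨fun h => h p, fun h q => q.support_bypass_subset_support
    (hT.eq_of_isPath q.bypass_isPath hp ▸ h)⟩

lemma notMem_support_of_mem_children (hT : T.IsTree) (hu : u ∈ children T r v)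
    {p : T.Walk v r} (hp : p.IsPath) : u ∉ p.support := by
  obtain ⟨hvu, hu⟩ := hu
  obtain ⟨q, hq⟩ := (hT.existsUnique_path u r).exists
  have hv : v ∈ q.support := hu q
  have htake : q.takeUntil v hv = cons hvu.symm nil :=
    hT.eq_of_isPath (hq.takeUntil hv) (by simp [hvu.ne'])
  have hq' : q = cons hvu.symm p := by
    rw [← q.take_spec hv, htake, hT.eq_of_isPath (hq.dropUntil hv) hp, cons_append, nil_append]
  exact ((cons_isPath_iff _ _).mp (hq' ▸ hq)).2

lemma not_inSubtree_of_mem_children (hT : T.IsTree) (hu : u ∈ children T r v) :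
    ¬ InSubtree T r u v := by
  obtain ⟨p, hp⟩ := (hT.existsUnique_path v r).exists
  exact fun h => notMem_support_of_mem_children hT hu hp (h p)

/-- The path to the root from a vertex of `T_u` ends with `u` followed by the path from `v`,
and two suffixes of the same length of one list coincide. -/
lemma eq_of_inSubtree_of_mem_children (hT : T.IsTree) {u₁ u₂ : V}
    (hu₁ : u₁ ∈ children T r v) (hu₂ : u₂ ∈ children T r v)
    (hx₁ : InSubtree T r u₁ x) (hx₂ : InSubtree T r u₂ x) : u₁ = u₂ := by
  obtain ⟨p, hp⟩ := (hT.existsUnique_path v r).exists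
  obtain ⟨q, hq⟩ := (hT.existsUnique_path x r).exists
  have key : ∀ u ∈ children T r v, InSubtree T r u x →
      u :: p.support = q.support.drop (q.support.length - (p.support.length + 1)) := by
    intro u hu hx
    have hs := q.support_dropUntil_suffix_support (hx q)
    rw [hT.eq_of_isPath (hq.dropUntil (hx q))
      (hp.cons (notMem_support_of_mem_children hT hu hp) (h := hu.1.symm)), support_cons] at hs
    simpa using List.suffix_iff_eq_drop.mp hs
  exact List.head_eq_of_cons_eq ((key u₁ hu₁ hx₁).trans (key u₂ hu₂ hx₂).symm)

lemma exists_mem_children_inSubtree (hT : T.IsTree) (hx : InSubtree T r v x) (hxv : x ≠ v) :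
    ∃ u ∈ children T r v, InSubtree T r u x := by
  obtain ⟨p, hp⟩ := (hT.existsUnique_path x r).exists
  have hv : v ∈ p.support := hx p
  clear hx
  induction p with
  | nil => simp_all
  | @cons x y r hxy p ih =>
    have hvp : v ∈ p.support := by simpa [hxv.symm] using hv
    by_cases hyv : y = v
    · subst hyv
      exact ⟨x, ⟨hxy.symm, (inSubtree_iff_mem_support hT hp).mpr hv⟩, InSubtree.refl T r x⟩
    · obtain ⟨u, hu, huy⟩ := ih hyv hp.of_cons hvp
      exact ⟨u, hu, (inSubtree_iff_mem_support hT hp).mpr (by simp [huy p])⟩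

lemma inSubtree_or_inSubtree_of_adj (hT : T.IsTree) {a b : V} (hab : T.Adj a b) :
    InSubtree T r a b ∨ InSubtree T r b a := by
  obtain ⟨p, hp⟩ := (hT.existsUnique_path b r).exists
  by_cases ha : a ∈ p.support
  · exact Or.inl ((inSubtree_iff_mem_support hT hp).mpr ha)
  · exact Or.inr ((inSubtree_iff_mem_support hT (hp.cons ha (h := hab))).mpr (by simp))

lemma exists_mem_children_of_adj (hT : T.IsTree) {a b : V} (hab : T.Adj a b)
    (ha : InSubtree T r v a) (hb : InSubtree T r v b) (hav : a ≠ v) (hbv : b ≠ v) :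
    ∃ u ∈ children T r v, InSubtree T r u a ∧ InSubtree T r u b := by
  obtain ⟨u, hu, hua⟩ := exists_mem_children_inSubtree hT ha hav
  rcases inSubtree_or_inSubtree_of_adj hT (r := r) hab with hab' | hba
  · exact ⟨u, hu, hua, hua.trans hab'⟩
  · obtain ⟨w, hw, hwb⟩ := exists_mem_children_inSubtree hT hb hbv
    obtain rfl := eq_of_inSubtree_of_mem_children hT hu hw hua (hwb.trans hba)
    exact ⟨u, hu, hua, hwb⟩

lemma eq_of_adj_of_mem_children (hT : T.IsTree) {u₁ u₂ y : V}
    (hu₁ : u₁ ∈ children T r v) (hu₂ : u₂ ∈ children T r v)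
    (hx : InSubtree T r u₁ x) (hy : InSubtree T r u₂ y) (hxy : T.Adj x y) : u₁ = u₂ := by
  have hxv : x ≠ v := by rintro rfl; exact not_inSubtree_of_mem_children hT hu₁ hx
  have hyv : y ≠ v := by rintro rfl; exact not_inSubtree_of_mem_children hT hu₂ hy
  obtain ⟨w, hw, hwx, hwy⟩ :=
    exists_mem_children_of_adj hT hxy (hu₁.2.trans hx) (hu₂.2.trans hy) hxv hyv
  exact (eq_of_inSubtree_of_mem_children hT hu₁ hw hx hwx).trans
    (eq_of_inSubtree_of_mem_children hT hu₂ hw hy hwy).symm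

end RootedTree

section EdgeOpenPacking

variable {H H' : SimpleGraph V} {S S' : Set (Sym2 V)} {u x : V}

lemma HasCommonEdge.symm {e₁ e₂ : Sym2 V} (h : HasCommonEdge H e₁ e₂) :
    HasCommonEdge H e₂ e₁ := by
  obtain ⟨x, y, hx, hy, hxy, h₁, h₂⟩ := h
  exact ⟨y, x, hy, hx, hxy.symm, Sym2.eq_swap ▸ h₂, Sym2.eq_swap ▸ h₁⟩

lemma IsEOP.empty (H : SimpleGraph V) : IsEOP H ∅ :=
  ⟨Set.empty_subset _, fun _ he => he.elim⟩

lemma IsEOP.of_le (hS : IsEOP H S) (hle : H' ≤ H) (hsub : S' ⊆ S)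
    (hedge : S' ⊆ H'.edgeSet) : IsEOP H' S' := by
  refine ⟨hedge, fun e₁ h₁ e₂ h₂ hne ⟨x, y, hx, hy, hxy, hn₁, hn₂⟩ => ?_⟩
  exact hS.2 e₁ (hsub h₁) e₂ (hsub h₂) hne ⟨x, y, hx, hy, hle hxy, hn₁, hn₂⟩

lemma IsEOP.insert {e : Sym2 V} (hS : IsEOP H S) (he : e ∈ H.edgeSet)
    (hcompat : ∀ e' ∈ S, ¬ HasCommonEdge H e e') : IsEOP H (insert e S) := by
  refine ⟨Set.insert_subset he hS.1, ?_⟩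
  rintro e₁ (rfl | h₁) e₂ (rfl | h₂) hne hc
  · exact hne rfl
  · exact hcompat e₂ h₂ hc
  · exact hcompat e₁ h₁ hc.symm
  · exact hS.2 e₁ h₁ e₂ h₂ hne hc

lemma degS_eq_one_of {e : Sym2 V} (he : e ∈ S) (hx : x ∈ e) (h : ∀ e' ∈ S, x ∈ e' → e' = e) :
    degS S x = 1 := by
  rw [degS, Set.ncard_eq_one]
  exact ⟨e, Set.eq_singleton_iff_unique_mem.mpr ⟨⟨he, hx⟩, fun e' he' => h e' he'.1 he'.2⟩⟩

lemma eq_of_degS_eq_one (h : degS S x = 1) {e₁ e₂ : Sym2 V} (h₁ : e₁ ∈ S) (hx₁ : x ∈ e₁)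
    (h₂ : e₂ ∈ S) (hx₂ : x ∈ e₂) : e₁ = e₂ := by
  obtain ⟨e, he⟩ := Set.ncard_eq_one.mp h
  have hmem : ∀ e' ∈ S, x ∈ e' → e' = e := fun e' h' hx' =>
    Set.mem_singleton_iff.mp (he ▸ ⟨h', hx'⟩ : e' ∈ ({e} : Set (Sym2 V)))
  exact (hmem e₁ h₁ hx₁).trans (hmem e₂ h₂ hx₂).symm

variable [Finite V]

lemma degS_eq_zero_iff : degS S x = 0 ↔ ∀ e ∈ S, x ∉ e := by
  simp only [degS, Set.ncard_eq_zero (Set.toFinite _), Set.eq_empty_iff_forall_notMem,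
    Set.mem_ofPred_eq, not_and]

lemma one_le_degS_iff : 1 ≤ degS S x ↔ ∃ e ∈ S, x ∈ e := by
  simp only [Nat.one_le_iff_ne_zero, Ne, degS_eq_zero_iff, not_forall, not_not, exists_prop]

lemma IsEOP.star_or_avoids_iff (hS : IsEOP H S) :
    ((1 ≤ degS S u ∧ ∀ x, s(u, x) ∈ S → degS S x = 1) ∨
        ∀ x, x = u ∨ H.Adj u x → degS S x = 0) ↔
      ∀ x y, H.Adj u x → s(x, y) ∈ S → y = u := by
  constructor
  · rintro (⟨hu, hstar⟩ | havoid) x y hux hxy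
    · by_cases hux' : s(u, x) ∈ S
      · have := eq_of_degS_eq_one (hstar x hux') hux' (Sym2.mem_mk_right u x) hxy
          (Sym2.mem_mk_left x y)
        rw [Sym2.eq_swap] at this
        exact (Sym2.congr_right.mp this).symm
      obtain ⟨e, he, hue⟩ := one_le_degS_iff.mp hu
      by_cases hexy : e = s(x, y)
      · rcases Sym2.mem_iff.mp (hexy ▸ hue) with rfl | rfl
        · exact (H.irrefl hux).elim
        · rfl
      exact (hS.2 e he _ hxy hexy ⟨u, x, hue, Sym2.mem_mk_left x y, hux,
        fun h => hux' (h ▸ he), fun h => hux' (h ▸ hxy)⟩).elim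
    · exact (degS_eq_zero_iff.mp (havoid x (Or.inr hux)) _ hxy (Sym2.mem_mk_left x y)).elim
  · intro hkey
    by_cases hu : 1 ≤ degS S u
    · refine Or.inl ⟨hu, fun x hux => degS_eq_one_of hux (Sym2.mem_mk_right u x) ?_⟩
      intro e he hxe
      obtain ⟨y, rfl⟩ := Sym2.mem_iff_exists.mp hxe
      rw [hkey x y ((H.mem_edgeSet).mp (hS.1 hux)) he, Sym2.eq_swap]
    · have hu0 := degS_eq_zero_iff.mp (Nat.eq_zero_of_not_pos hu)
      refine Or.inr fun x hx => degS_eq_zero_iff.mpr fun e he hxe => ?_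
      rcases hx with rfl | hux
      · exact hu0 e he hxe
      · obtain ⟨y, rfl⟩ := Sym2.mem_iff_exists.mp hxe
        exact hu0 _ he (hkey x y hux he ▸ Sym2.mem_mk_right x y)

end EdgeOpenPacking

section Maxima

variable [Finite V] {H : SimpleGraph V} {S : Set (Sym2 V)} {u : V}

lemma bddAbove_of_forall_exists_ncard_eq {α : Type*} [Finite α] {A : Set ℕ}
    (h : ∀ n ∈ A, ∃ S : Set α, S.ncard = n) : BddAbove A :=
  ⟨Nat.card α, fun n hn => by obtain ⟨S, rfl⟩ := h n hn; exact Set.ncard_le_card S⟩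

lemma le_rhoC (hS : IsEOP H S) (h₁ : 1 ≤ degS S u) (h₂ : ∀ x, s(u, x) ∈ S → degS S x = 1) :
    S.ncard ≤ rhoC H u :=
  le_csSup (bddAbove_of_forall_exists_ncard_eq fun _ ⟨S, _, _, _, hn⟩ => ⟨S, hn⟩)
    ⟨S, hS, h₁, h₂, rfl⟩

lemma le_rhoL (hS : IsEOP H S) (h : degS S u = 1) : S.ncard ≤ rhoL H u :=
  le_csSup (bddAbove_of_forall_exists_ncard_eq fun _ ⟨S, _, _, hn⟩ => ⟨S, hn⟩) ⟨S, hS, h, rfl⟩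

lemma le_rhoP (hS : IsEOP H S) (h : degS S u = 0) : S.ncard ≤ rhoP H u :=
  le_csSup (bddAbove_of_forall_exists_ncard_eq fun _ ⟨S, _, _, hn⟩ => ⟨S, hn⟩) ⟨S, hS, h, rfl⟩

lemma le_rhoPP (hS : IsEOP H S) (h : ∀ x, x = u ∨ H.Adj u x → degS S x = 0) :
    S.ncard ≤ rhoPP H u :=
  le_csSup (bddAbove_of_forall_exists_ncard_eq fun _ ⟨S, _, _, hn⟩ => ⟨S, hn⟩) ⟨S, hS, h, rfl⟩

lemma exists_ncard_eq_rhoP (H : SimpleGraph V) (u : V) :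
    ∃ S, IsEOP H S ∧ degS S u = 0 ∧ S.ncard = rhoP H u :=
  show rhoP H u ∈ {n | ∃ S, IsEOP H S ∧ degS S u = 0 ∧ S.ncard = n} from
    Nat.sSup_mem ⟨0, ∅, IsEOP.empty H, by simp [degS], Set.ncard_empty _⟩
    (bddAbove_of_forall_exists_ncard_eq fun _ ⟨S, _, _, hn⟩ => ⟨S, hn⟩)

lemma exists_ncard_eq_rhoPP (H : SimpleGraph V) (u : V) :
    ∃ S, IsEOP H S ∧ (∀ x, x = u ∨ H.Adj u x → degS S x = 0) ∧ S.ncard = rhoPP H u :=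
  show rhoPP H u ∈ {n | ∃ S, IsEOP H S ∧ (∀ x, x = u ∨ H.Adj u x → degS S x = 0) ∧
    S.ncard = n} from Nat.sSup_mem ⟨0, ∅, IsEOP.empty H, by simp [degS], Set.ncard_empty _⟩
    (bddAbove_of_forall_exists_ncard_eq fun _ ⟨S, _, _, hn⟩ => ⟨S, hn⟩)

lemma exists_ncard_eq_rhoC (h : 0 < rhoC H u) :
    ∃ S, IsEOP H S ∧ 1 ≤ degS S u ∧ (∀ x, s(u, x) ∈ S → degS S x = 1) ∧
      S.ncard = rhoC H u :=
  show rhoC H u ∈ {n | ∃ S, IsEOP H S ∧ 1 ≤ degS S u ∧ (∀ x, s(u, x) ∈ S → degS S x = 1) ∧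
    S.ncard = n} from Nat.sSup_mem
    (Set.nonempty_iff_ne_empty.mpr fun hempty => by simp [rhoC, hempty] at h)
    (bddAbove_of_forall_exists_ncard_eq fun _ ⟨S, _, _, _, hn⟩ => ⟨S, hn⟩)

lemma le_max_rhoC_rhoPP (hS : IsEOP H S) (h : ∀ x y, H.Adj u x → s(x, y) ∈ S → y = u) :
    S.ncard ≤ max (rhoC H u) (rhoPP H u) := by
  rcases hS.star_or_avoids_iff.mpr h with ⟨h₁, h₂⟩ | h
  · exact le_max_of_le_left (le_rhoC hS h₁ h₂)
  · exact le_max_of_le_right (le_rhoPP hS h)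

lemma exists_ncard_eq_max_rhoC_rhoPP (H : SimpleGraph V) (u : V) :
    ∃ S, IsEOP H S ∧ (∀ x y, H.Adj u x → s(x, y) ∈ S → y = u) ∧
      S.ncard = max (rhoC H u) (rhoPP H u) := by
  rcases le_or_gt (rhoC H u) (rhoPP H u) with hle | hlt
  · obtain ⟨S, hS, havoid, hcard⟩ := exists_ncard_eq_rhoPP H u
    exact ⟨S, hS, hS.star_or_avoids_iff.mp (Or.inr havoid), by rw [max_eq_right hle, hcard]⟩
  · obtain ⟨S, hS, h₁, h₂, hcard⟩ := exists_ncard_eq_rhoC (pos_of_gt hlt)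
    exact ⟨S, hS, hS.star_or_avoids_iff.mp (Or.inl ⟨h₁, h₂⟩),
      by rw [max_eq_left hlt.le, hcard]⟩

end Maxima

section Subtree

variable {T : SimpleGraph V} {r v u w : V} {e : Sym2 V}

lemma subtree_mono (h : InSubtree T r v w) : subtree T r w ≤ subtree T r v :=
  fun _ _ hab => ⟨hab.1, h.trans hab.2.1, h.trans hab.2.2⟩

lemma inSubtree_of_mem_edgeSet (he : e ∈ (subtree T r w).edgeSet) {x : V} (hx : x ∈ e) :
    InSubtree T r w x := by
  induction e using Sym2.ind with
  | _ a b => rcases Sym2.mem_iff.mp hx with rfl | rfl; exacts [he.2.1, he.2.2]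

lemma HasCommonEdge.subtree_of_mem_edgeSet {e₁ e₂ : Sym2 V}
    (h : HasCommonEdge (subtree T r v) e₁ e₂) (h₁ : e₁ ∈ (subtree T r w).edgeSet)
    (h₂ : e₂ ∈ (subtree T r w).edgeSet) : HasCommonEdge (subtree T r w) e₁ e₂ := by
  obtain ⟨x, y, hx, hy, hxy, hn₁, hn₂⟩ := h
  exact ⟨x, y, hx, hy,
    ⟨hxy.1, inSubtree_of_mem_edgeSet h₁ hx, inSubtree_of_mem_edgeSet h₂ hy⟩, hn₁, hn₂⟩

lemma notMem_of_mem_edgeSet_of_mem_children (hT : T.IsTree) (hw : w ∈ children T r v)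
    (he : e ∈ (subtree T r w).edgeSet) : v ∉ e :=
  fun hv => not_inSubtree_of_mem_children hT hw (inSubtree_of_mem_edgeSet he hv)

lemma exists_mem_children_of_mem_edgeSet (hT : T.IsTree) (he : e ∈ (subtree T r v).edgeSet)
    (hv : v ∉ e) : ∃ w ∈ children T r v, e ∈ (subtree T r w).edgeSet := by
  induction e using Sym2.ind with
  | _ a b =>
    obtain ⟨hab, ha, hb⟩ := he
    obtain ⟨w, hw, hwa, hwb⟩ := exists_mem_children_of_adj hT hab ha hb
      (by rintro rfl; simp at hv) (by rintro rfl; simp at hv)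
    exact ⟨w, hw, hab, hwa, hwb⟩

lemma not_hasCommonEdge_of_mem_children (hT : T.IsTree) {w₁ w₂ : V}
    (hw₁ : w₁ ∈ children T r v) (hw₂ : w₂ ∈ children T r v) (hne : w₁ ≠ w₂) {e₁ e₂ : Sym2 V}
    (h₁ : e₁ ∈ (subtree T r w₁).edgeSet) (h₂ : e₂ ∈ (subtree T r w₂).edgeSet) :
    ¬ HasCommonEdge (subtree T r v) e₁ e₂ :=
  fun ⟨_, _, hx, hy, hxy, _, _⟩ => hne (eq_of_adj_of_mem_children hT hw₁ hw₂
    (inSubtree_of_mem_edgeSet h₁ hx) (inSubtree_of_mem_edgeSet h₂ hy) hxy.1)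

lemma isEOP_biUnion_children (hT : T.IsTree) {F : V → Set (Sym2 V)}
    (hF : ∀ w ∈ children T r v, IsEOP (subtree T r w) (F w)) :
    IsEOP (subtree T r v) (⋃ w ∈ children T r v, F w) := by
  refine ⟨Set.iUnion₂_subset fun w hw => (hF w hw).1.trans (edgeSet_mono (subtree_mono hw.2)),
    ?_⟩
  simp only [Set.mem_iUnion₂]
  rintro e₁ ⟨w₁, hw₁, h₁⟩ e₂ ⟨w₂, hw₂, h₂⟩ hne hc
  by_cases hw : w₁ = w₂
  · subst hw
    exact (hF w₁ hw₁).2 e₁ h₁ e₂ h₂ hne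
      (hc.subtree_of_mem_edgeSet ((hF w₁ hw₁).1 h₁) ((hF w₁ hw₁).1 h₂))
  · exact not_hasCommonEdge_of_mem_children hT hw₁ hw₂ hw ((hF _ hw₁).1 h₁) ((hF _ hw₂).1 h₂) hc

lemma not_hasCommonEdge_iff_notMem (hT : T.IsTree) (hu : u ∈ children T r v)
    (hw : w ∈ children T r v) (hwu : w ≠ u) (he : e ∈ (subtree T r w).edgeSet) :
    ¬ HasCommonEdge (subtree T r v) s(v, u) e ↔ w ∉ e := by
  have hve := notMem_of_mem_edgeSet_of_mem_children hT hw he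
  constructor
  · intro h hwe
    exact h ⟨v, w, Sym2.mem_mk_left v u, hwe, ⟨hw.1, InSubtree.refl T r v, hw.2⟩,
      fun h' => hwu (Sym2.congr_right.mp h'), fun h' => hve (h' ▸ Sym2.mem_mk_left v w)⟩
  · rintro hwe ⟨x, y, hx, hy, hxy, -, -⟩
    have hyw := inSubtree_of_mem_edgeSet he hy
    rcases Sym2.mem_iff.mp hx with rfl | rfl
    · obtain rfl := eq_of_inSubtree_of_mem_children hT ⟨hxy.1, hxy.2.2⟩ hw
        (InSubtree.refl T r y) hyw
      exact hwe hy
    · exact hwu (eq_of_adj_of_mem_children hT hu hw (InSubtree.refl T r x) hyw hxy.1).symm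

lemma not_hasCommonEdge_iff (hT : T.IsTree) (hu : u ∈ children T r v)
    (he : e ∈ (subtree T r u).edgeSet) :
    ¬ HasCommonEdge (subtree T r v) s(v, u) e ↔
      ∀ x y, (subtree T r u).Adj u x → e = s(x, y) → y = u := by
  constructor
  · rintro h x y hux rfl
    by_contra hyu
    have hxv : x ≠ v := by rintro rfl; exact not_inSubtree_of_mem_children hT hu hux.2.2
    exact h ⟨u, x, Sym2.mem_mk_right v u, Sym2.mem_mk_left x y, subtree_mono hu.2 hux,
      fun h' => hxv (Sym2.congr_right.mp (h'.trans Sym2.eq_swap)),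
      fun h' => hyu (Sym2.congr_right.mp (Sym2.eq_swap.trans h')).symm⟩
  · rintro hkey ⟨x, y, hx, hy, hxy, hxy₁, hxy₂⟩
    have hyu := inSubtree_of_mem_edgeSet he hy
    rcases Sym2.mem_iff.mp hx with rfl | rfl
    · obtain rfl := eq_of_inSubtree_of_mem_children hT ⟨hxy.1, hxy.2.2⟩ hu
        (InSubtree.refl T r y) hyu
      exact hxy₁ rfl
    · obtain ⟨z, rfl⟩ := Sym2.mem_iff_exists.mp hy
      obtain rfl := hkey y z ⟨hxy.1, InSubtree.refl T r x, hyu⟩ rfl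
      exact hxy₂ Sym2.eq_swap

lemma eq_insert_biUnion_inter_edgeSet (hT : T.IsTree) {S : Set (Sym2 V)}
    (hS : S ⊆ (subtree T r v).edgeSet) (hvu : s(v, u) ∈ S) (hdeg : degS S v = 1) :
    S = insert s(v, u) (⋃ w ∈ children T r v, S ∩ (subtree T r w).edgeSet) := by
  ext e
  constructor
  · intro he
    by_cases hv : v ∈ e
    · exact Or.inl (eq_of_degS_eq_one hdeg he hv hvu (Sym2.mem_mk_left v u))
    · obtain ⟨w, hw, hew⟩ := exists_mem_children_of_mem_edgeSet hT (hS he) hv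
      exact Or.inr (Set.mem_biUnion hw ⟨he, hew⟩)
  · rintro (rfl | he)
    · exact hvu
    · obtain ⟨w, -, h⟩ := Set.mem_iUnion₂.mp he
      exact h.1

variable [Finite V]

lemma ncard_insert_biUnion_children (hT : T.IsTree) (hu : u ∈ children T r v)
    {F : V → Set (Sym2 V)} (hF : ∀ w ∈ children T r v, F w ⊆ (subtree T r w).edgeSet) :
    (insert s(v, u) (⋃ w ∈ children T r v, F w)).ncard =
      (F u).ncard + 1 + ∑ᶠ w ∈ children T r v \ {u}, (F w).ncard := by
  have hvu : s(v, u) ∉ ⋃ w ∈ children T r v, F w := by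
    simp only [Set.mem_iUnion₂, not_exists]
    exact fun w hw h => notMem_of_mem_edgeSet_of_mem_children hT hw (hF w hw h)
      (Sym2.mem_mk_left v u)
  have hdisj : (children T r v).PairwiseDisjoint F := fun w₁ hw₁ w₂ hw₂ hne =>
    Set.disjoint_left.mpr fun e h₁ h₂ => hne (eq_of_inSubtree_of_mem_children hT hw₁ hw₂
      (inSubtree_of_mem_edgeSet (hF w₁ hw₁ h₁) e.out_fst_mem)
      (inSubtree_of_mem_edgeSet (hF w₂ hw₂ h₂) e.out_fst_mem))
  have hsplit : ∑ᶠ w ∈ children T r v, (F w).ncard =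
      (F u).ncard + ∑ᶠ w ∈ children T r v \ {u}, (F w).ncard := by
    conv_lhs => rw [← Set.insert_sdiff_self_of_mem hu]
    exact finsum_mem_insert _ (fun h => h.2 rfl) (Set.toFinite _)
  rw [Set.ncard_insert_of_notMem hvu,
    (Set.toFinite _).ncard_biUnion (fun _ _ => Set.toFinite _) hdisj, hsplit]
  ring

end Subtree

section Bounds

variable [Finite V] {T : SimpleGraph V} {r v u : V}

lemma exists_mem_children_ncard_le (hT : T.IsTree) {S : Set (Sym2 V)}
    (hS : IsEOP (subtree T r v) S) (hdeg : degS S v = 1) :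
    ∃ u ∈ children T r v, S.ncard ≤
      max (rhoC (subtree T r u) u) (rhoPP (subtree T r u) u) + 1 +
        ∑ᶠ w ∈ children T r v \ {u}, rhoP (subtree T r w) w := by
  obtain ⟨e₀, he₀, hve₀⟩ := one_le_degS_iff.mp hdeg.ge
  obtain ⟨u, rfl⟩ := Sym2.mem_iff_exists.mp hve₀
  have hu : u ∈ children T r v := ⟨(hS.1 he₀).1, (hS.1 he₀).2.2⟩
  have hF : ∀ w ∈ children T r v, IsEOP (subtree T r w) (S ∩ (subtree T r w).edgeSet) :=
    fun w hw => hS.of_le (subtree_mono hw.2) Set.inter_subset_left Set.inter_subset_right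
  have hcompat : ∀ w ∈ children T r v, ∀ e ∈ S ∩ (subtree T r w).edgeSet,
      ¬ HasCommonEdge (subtree T r v) s(v, u) e := fun w hw e he => hS.2 _ he₀ _ he.1
    fun h => notMem_of_mem_edgeSet_of_mem_children hT hw he.2 (h ▸ Sym2.mem_mk_left v u)
  have hFu : (S ∩ (subtree T r u).edgeSet).ncard ≤
      max (rhoC (subtree T r u) u) (rhoPP (subtree T r u) u) :=
    le_max_rhoC_rhoPP (hF u hu) fun x y hux hxy =>
      (not_hasCommonEdge_iff hT hu hxy.2).mp (hcompat u hu _ hxy) x y hux rfl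
  have hFw : ∀ w ∈ children T r v \ {u},
      (S ∩ (subtree T r w).edgeSet).ncard ≤ rhoP (subtree T r w) w := fun w hw =>
    le_rhoP (hF w hw.1) (degS_eq_zero_iff.mpr fun e he =>
      (not_hasCommonEdge_iff_notMem hT hu hw.1 hw.2 he.2).mp (hcompat w hw.1 e he))
  refine ⟨u, hu, ?_⟩
  calc S.ncard = (S ∩ (subtree T r u).edgeSet).ncard + 1 +
        ∑ᶠ w ∈ children T r v \ {u}, (S ∩ (subtree T r w).edgeSet).ncard :=
      (congrArg Set.ncard (eq_insert_biUnion_inter_edgeSet hT hS.1 he₀ hdeg)).trans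
        (ncard_insert_biUnion_children hT hu fun _ _ => Set.inter_subset_right)
    _ ≤ _ := add_le_add (add_le_add_left hFu 1) (finsum_mem_le_finsum_mem (Set.toFinite _) hFw)

lemma exists_isEOP_degS_eq_one_ncard_eq (hT : T.IsTree) (hu : u ∈ children T r v) :
    ∃ S, IsEOP (subtree T r v) S ∧ degS S v = 1 ∧ S.ncard =
      max (rhoC (subtree T r u) u) (rhoPP (subtree T r u) u) + 1 +
        ∑ᶠ w ∈ children T r v \ {u}, rhoP (subtree T r w) w := by
  obtain ⟨Su, hSu, hkey, hcardu⟩ := exists_ncard_eq_max_rhoC_rhoPP (subtree T r u) u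
  choose SW hSW hdegSW hcardSW using
    fun w => exists_ncard_eq_rhoP (subtree T r w) w
  have hF : ∀ w ∈ children T r v, IsEOP (subtree T r w) (Function.update SW u Su w) := by
    intro w _
    by_cases hwu : w = u
    · rw [hwu, Function.update_self]
      exact hSu
    · rw [Function.update_of_ne hwu]
      exact hSW w
  have hcompat : ∀ e ∈ ⋃ w ∈ children T r v, Function.update SW u Su w,
      ¬ HasCommonEdge (subtree T r v) s(v, u) e := by
    simp only [Set.mem_iUnion₂]
    rintro e ⟨w, hw, he⟩
    by_cases hwu : w = u
    · rw [hwu, Function.update_self] at he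
      exact (not_hasCommonEdge_iff hT hu (hSu.1 he)).mpr fun x y hux hexy =>
        hkey x y hux (hexy ▸ he)
    · rw [Function.update_of_ne hwu] at he
      exact (not_hasCommonEdge_iff_notMem hT hu hw hwu ((hSW w).1 he)).mpr
        (degS_eq_zero_iff.mp (hdegSW w) e he)
  refine ⟨insert s(v, u) (⋃ w ∈ children T r v, Function.update SW u Su w),
    (isEOP_biUnion_children hT hF).insert ⟨hu.1, InSubtree.refl T r v, hu.2⟩ hcompat, ?_, ?_⟩
  · refine degS_eq_one_of (Set.mem_insert _ _) (Sym2.mem_mk_left v u) ?_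
    rintro e (rfl | he) hve
    · rfl
    · obtain ⟨w, hw, he⟩ := Set.mem_iUnion₂.mp he
      exact (notMem_of_mem_edgeSet_of_mem_children hT hw ((hF w hw).1 he) hve).elim
  · rw [ncard_insert_biUnion_children hT hu fun w hw => (hF w hw).1, Function.update_self,
      hcardu]
    congr 1
    exact finsum_mem_congr rfl fun w hw => by rw [Function.update_of_ne hw.2, hcardSW]

end Bounds

theorem stmt19_general [Fintype V] (T : SimpleGraph V) (hT : T.IsTree) (r v : V) :
    rhoL (subtree T r v) v =
      sSup {n | ∃ u : V, (T.Adj v u ∧ InSubtree T r v u) ∧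
        n = max (rhoC (subtree T r u) u) (rhoPP (subtree T r u) u) + 1 +
          ∑ᶠ w ∈ {w : V | (T.Adj v w ∧ InSubtree T r v w) ∧ w ≠ u},
            rhoP (subtree T r w) w} := by
  apply le_antisymm
  · refine csSup_le' ?_
    rintro _ ⟨S, hS, hdeg, rfl⟩
    obtain ⟨u, hu, hle⟩ := exists_mem_children_ncard_le hT hS hdeg
    refine hle.trans (le_csSup (bddAbove_setOf_exists_eq _ _) ?_)
    exact ⟨u, hu, rfl⟩
  · refine csSup_le' ?_
    rintro _ ⟨u, hu, rfl⟩
    obtain ⟨S, hS, hdeg, hcard⟩ := exists_isEOP_degS_eq_one_ncard_eq hT hu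
    exact hcard ▸ le_rhoL hS hdeg

theorem stmt19 [Fintype V] (T : SimpleGraph V) (hT : T.IsTree) (r v : V)
    (hchild : ∃ u : V, T.Adj v u ∧ InSubtree T r v u) :
    rhoL (subtree T r v) v =
      sSup {n | ∃ u : V, (T.Adj v u ∧ InSubtree T r v u) ∧
        n = max (rhoC (subtree T r u) u) (rhoPP (subtree T r u) u) + 1 +
          ∑ᶠ w ∈ {w : V | (T.Adj v w ∧ InSubtree T r v w) ∧ w ≠ u},
            rhoP (subtree T r w) w} :=
  stmt19_general T hT r v
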